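/- The estimate S(x) \asymp \sqrt{x/\log x} holds if and only if the Chebyshev bounds \pi(x) \asymp x/\log x hold. -/
import Mathlib
open Filter

noncomputable def primesUpTo (x : ℝ) : Finset ℕ :=
  (Finset.range (⌊x⌋₊ + 1)).filter Nat.Prime

noncomputable def S (x : ℝ) : ℝ := ∑ p ∈ primesUpTo x, Real.sqrt (Real.log p / p)

noncomputable def M (x : ℝ) : ℝ := ∑ p ∈ primesUpTo x, Real.log p / p

lemma mem_primesUpTo {p : ℕ} {x : ℝ} : p ∈ primesUpTo x ↔ p.Prime ∧ p ≤ ⌊x⌋₊ := by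
  simp [primesUpTo, Nat.lt_succ_iff, and_comm]

lemma card_primesUpTo (x : ℝ) : (primesUpTo x).card = Nat.primeCounting ⌊x⌋₊ := by
  rw [Nat.primeCounting, Nat.primeCounting', Nat.count_eq_card_filter_range]
  rfl

lemma primesUpTo_mono {y x : ℝ} (h : y ≤ x) : primesUpTo y ⊆ primesUpTo x := by
  intro p hp
  rw [mem_primesUpTo] at hp ⊢
  exact ⟨hp.1, hp.2.trans (Nat.floor_le_floor h)⟩

lemma primesUpTo_natCast_floor (x : ℝ) : primesUpTo ((⌊x⌋₊ : ℕ) : ℝ) = primesUpTo x := by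
  simp [primesUpTo]

lemma term_nonneg (p : ℕ) : 0 ≤ Real.sqrt (Real.log p / p) := Real.sqrt_nonneg _

lemma S_nonneg (x : ℝ) : 0 ≤ S x := Finset.sum_nonneg fun p _ => term_nonneg p

lemma S_mono {y x : ℝ} (h : y ≤ x) : S y ≤ S x :=
  Finset.sum_le_sum_of_subset_of_nonneg (primesUpTo_mono h) fun p _ _ => term_nonneg p

lemma mem_sdiff_primesUpTo {p : ℕ} {y x : ℝ} (hy : 0 ≤ y)
    (hp : p ∈ primesUpTo x \ primesUpTo y) :
    p.Prime ∧ y < (p : ℝ) ∧ (p : ℝ) ≤ x := by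
  rw [Finset.mem_sdiff, mem_primesUpTo, mem_primesUpTo] at hp
  obtain ⟨⟨hpp, hpx⟩, hno⟩ := hp
  refine ⟨hpp, ?_, ?_⟩
  · have h1 : ⌊y⌋₊ < p := by
      by_contra h
      exact hno ⟨hpp, Nat.le_of_not_lt h⟩
    have := Nat.lt_floor_add_one y
    have : (⌊y⌋₊ : ℝ) + 1 ≤ p := by exact_mod_cast h1
    linarith [Nat.lt_floor_add_one y]
  · calc (p : ℝ) ≤ (⌊x⌋₊ : ℝ) := by exact_mod_cast hpx
    _ ≤ x := Nat.floor_le (by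
        by_contra h
        push_neg at h
        have hfl : ⌊x⌋₊ = 0 := Nat.floor_eq_zero.mpr (lt_of_le_of_lt h.le one_pos)
        rw [hfl] at hpx
        exact absurd (Nat.le_zero.mp hpx ▸ hpp) Nat.not_prime_zero)

lemma S_split_upper {y x : ℝ} (hy : 1 ≤ y) (hxy : y ≤ x) :
    S x ≤ S y + ((primesUpTo x \ primesUpTo y).card : ℝ) * Real.sqrt (Real.log x / y) := by
  have hsub := primesUpTo_mono hxy
  have hsplit : S x = (∑ p ∈ primesUpTo x \ primesUpTo y, Real.sqrt (Real.log p / p)) + S y := by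
    rw [S, S, Finset.sum_sdiff hsub]
  rw [hsplit]
  have hterm : ∀ p ∈ primesUpTo x \ primesUpTo y,
      Real.sqrt (Real.log p / p) ≤ Real.sqrt (Real.log x / y) := by
    intro p hp
    obtain ⟨hpp, hyp, hpx⟩ := mem_sdiff_primesUpTo (by linarith) hp
    apply Real.sqrt_le_sqrt
    apply div_le_div₀ (Real.log_nonneg (by linarith))
      (Real.log_le_log (by exact_mod_cast hpp.pos) hpx) (by linarith) (le_of_lt hyp)
  calc (∑ p ∈ primesUpTo x \ primesUpTo y, Real.sqrt (Real.log p / p)) + S y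
      ≤ ((primesUpTo x \ primesUpTo y).card : ℝ) * Real.sqrt (Real.log x / y) + S y := by
        gcongr
        exact (Finset.sum_le_card_nsmul _ _ _ hterm).trans_eq (by rw [nsmul_eq_mul])
    _ = _ := by ring

lemma S_split_lower {y x : ℝ} (hy : 1 ≤ y) (hxy : y ≤ x) :
    ((primesUpTo x \ primesUpTo y).card : ℝ) * Real.sqrt (Real.log y / x) ≤ S x := by
  have hsub := primesUpTo_mono hxy
  have hterm : ∀ p ∈ primesUpTo x \ primesUpTo y,
      Real.sqrt (Real.log y / x) ≤ Real.sqrt (Real.log p / p) := by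
    intro p hp
    obtain ⟨hpp, hyp, hpx⟩ := mem_sdiff_primesUpTo (by linarith) hp
    apply Real.sqrt_le_sqrt
    have hp1 : (1 : ℝ) ≤ p := by linarith
    apply div_le_div₀ (Real.log_nonneg hp1)
      (Real.log_le_log (by linarith) (le_of_lt hyp)) (by linarith) hpx
  calc ((primesUpTo x \ primesUpTo y).card : ℝ) * Real.sqrt (Real.log y / x)
      = (primesUpTo x \ primesUpTo y).card • Real.sqrt (Real.log y / x) := by rw [nsmul_eq_mul]
    _ ≤ ∑ p ∈ primesUpTo x \ primesUpTo y, Real.sqrt (Real.log p / p) :=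
        Finset.card_nsmul_le_sum _ _ _ hterm
    _ ≤ S x := by
        rw [S, ← Finset.sum_sdiff hsub]
        have := S_nonneg y
        rw [S] at this
        linarith

lemma mul_sqrt_le {A B t s : ℝ} (hA : 0 ≤ A) (hB : 0 ≤ B) (ht : 0 ≤ t)
    (h : A^2 * t ≤ B^2 * s) : A * Real.sqrt t ≤ B * Real.sqrt s := by
  have h1 : A * Real.sqrt t = Real.sqrt (A^2 * t) := by
    rw [Real.sqrt_mul (by positivity), Real.sqrt_sq hA]
  have h2 : B * Real.sqrt s = Real.sqrt (B^2 * s) := by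
    rw [Real.sqrt_mul (by positivity), Real.sqrt_sq hB]
  rw [h1, h2]
  exact Real.sqrt_le_sqrt h

lemma div_log_mono {a b : ℝ} (ha : Real.exp 1 ≤ a) (hab : a ≤ b) :
    a / Real.log a ≤ b / Real.log b := by
  have h1 : (1:ℝ) < Real.exp 1 := by
    have := Real.add_one_le_exp 1; linarith
  have hla : 0 < Real.log a := Real.log_pos (lt_of_lt_of_le h1 ha)
  have hlb : 0 < Real.log b := Real.log_pos (lt_of_lt_of_le h1 (ha.trans hab))
  have h := Real.log_div_self_antitoneOn (by exact ha) (by exact ha.trans hab) hab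
  simp only at h
  rw [div_le_div_iff₀ (by linarith) (by linarith)] at h
  rw [div_le_div_iff₀ hla hlb]
  linarith

lemma card_primesUpTo_le {y : ℝ} (hy : 0 ≤ y) : ((primesUpTo y).card : ℝ) ≤ y + 1 := by
  have h : (primesUpTo y).card ≤ ⌊y⌋₊ + 1 := by
    calc (primesUpTo y).card ≤ (Finset.range (⌊y⌋₊ + 1)).card := Finset.card_filter_le _ _
      _ = ⌊y⌋₊ + 1 := Finset.card_range _
  calc ((primesUpTo y).card : ℝ) ≤ (⌊y⌋₊ : ℝ) + 1 := by exact_mod_cast h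
    _ ≤ y + 1 := by linarith [Nat.floor_le hy]

lemma log_le_four_sqrt_sqrt {x : ℝ} (hx : 1 ≤ x) :
    Real.log x ≤ 4 * Real.sqrt (Real.sqrt x) := by
  have h0 : (0:ℝ) ≤ x := by linarith
  have h1 : Real.log (Real.sqrt (Real.sqrt x)) = Real.log x / 4 := by
    rw [Real.log_sqrt (Real.sqrt_nonneg x), Real.log_sqrt h0]; ring
  have h2 : Real.log (Real.sqrt (Real.sqrt x)) ≤ Real.sqrt (Real.sqrt x) := by
    have := Real.log_le_sub_one_of_pos (x := Real.sqrt (Real.sqrt x))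
      (by positivity)
    linarith
  rw [h1] at h2; linarith

lemma sqrt_le_self' {x : ℝ} (hx : 1 ≤ x) : Real.sqrt x ≤ x := by
  nlinarith [Real.sq_sqrt (le_trans zero_le_one hx), Real.sqrt_nonneg x,
    sq_nonneg (Real.sqrt x - 1)]

lemma sqrt_sqrt_large {x a : ℝ} (ha : 0 ≤ a) (hx : a^4 ≤ x) :
    a ≤ Real.sqrt (Real.sqrt x) := by
  have hx0 : (0:ℝ) ≤ x := le_trans (by positivity) hx
  have h1 : a^2 ≤ Real.sqrt x := by
    rw [show a^4 = (a^2)^2 by ring] at hx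
    exact (Real.le_sqrt (by positivity) hx0).mpr hx
  exact (Real.le_sqrt ha (Real.sqrt_nonneg x)).mpr (by nlinarith [Real.sqrt_nonneg x])

lemma sqrt_add_one_le {x : ℝ} (hx : (4096:ℝ) ≤ x) :
    Real.sqrt x + 1 ≤ x / Real.log x ∧ 0 < Real.log x := by
  have hx1 : (1:ℝ) ≤ x := by linarith
  have hL : 0 < Real.log x := Real.log_pos (by linarith)
  set t := Real.sqrt (Real.sqrt x) with ht
  have ht8 : (8:ℝ) ≤ t := sqrt_sqrt_large (by norm_num) (by norm_num; linarith)
  have ht2 : t^2 = Real.sqrt x := Real.sq_sqrt (Real.sqrt_nonneg x)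
  have ht4 : t^4 = x := by
    rw [show t^4 = (t^2)^2 by ring, ht2]
    exact Real.sq_sqrt (by linarith)
  have hlog : Real.log x ≤ 4 * t := log_le_four_sqrt_sqrt hx1
  refine ⟨?_, hL⟩
  rw [le_div_iff₀ hL]
  calc (Real.sqrt x + 1) * Real.log x = (t^2 + 1) * Real.log x := by rw [ht2]
    _ ≤ (t^2 + 1) * (4*t) := by
        apply mul_le_mul_of_nonneg_left hlog (by positivity)
    _ ≤ t^4 := by nlinarith
    _ = x := ht4

lemma pi_upper_of_S {C x₀ : ℝ} (hC : 0 ≤ C)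
    (hS : ∀ x : ℝ, x₀ ≤ x → S x ≤ C * Real.sqrt (x / Real.log x)) :
    ∀ᶠ x : ℝ in atTop, ((Nat.primeCounting ⌊x⌋₊ : ℝ)) ≤ (2*C+1) * (x / Real.log x) := by
  filter_upwards [eventually_ge_atTop x₀, eventually_ge_atTop (4096:ℝ)] with x hx0 hx
  obtain ⟨hs1, hL⟩ := sqrt_add_one_le hx
  have hx1 : (1:ℝ) ≤ x := by linarith
  have hxpos : (0:ℝ) < x := by linarith
  set y := Real.sqrt x with hy
  have hy1 : (1:ℝ) ≤ y := by
    rw [hy]; exact (Real.le_sqrt (by norm_num) (by linarith)).mpr (by norm_num; linarith)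
  have hyx : y ≤ x := sqrt_le_self' hx1
  set D := primesUpTo x \ primesUpTo y with hD
  have hcard : (primesUpTo x).card = D.card + (primesUpTo y).card := by
    rw [hD]
    exact (Finset.card_sdiff_add_card_eq_card (primesUpTo_mono hyx)).symm
  have hlogy : Real.log y = Real.log x / 2 := Real.log_sqrt hxpos.le
  -- card D bound via S_split_lower
  have hsplit := S_split_lower hy1 hyx
  rw [hlogy] at hsplit
  have hDle : (D.card : ℝ) ≤ 2*C*(x/Real.log x) := by
    have hspos : 0 < Real.sqrt (Real.log x / 2 / x) := by positivity
    have h1 : (D.card : ℝ) * Real.sqrt (Real.log x / 2 / x) ≤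
        (2*C*(x/Real.log x)) * Real.sqrt (Real.log x / 2 / x) := by
      calc (D.card : ℝ) * Real.sqrt (Real.log x / 2 / x) ≤ S x := hsplit
        _ ≤ C * Real.sqrt (x / Real.log x) := hS x hx0
        _ ≤ (2*C*(x/Real.log x)) * Real.sqrt (Real.log x / 2 / x) := by
            apply mul_sqrt_le hC (by positivity) (by positivity)
            have : (2*C*(x/Real.log x))^2 * (Real.log x / 2 / x) = 2*C^2*(x/Real.log x) := by
              field_simp
            rw [this]
            nlinarith [mul_pos hxpos (by positivity : (0:ℝ) < 1/Real.log x),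
              div_pos hxpos hL, sq_nonneg C, mul_nonneg (sq_nonneg C) (div_pos hxpos hL).le]
      
    exact le_of_mul_le_mul_right h1 hspos
  have hπ : (Nat.primeCounting ⌊x⌋₊ : ℝ) = (D.card : ℝ) + ((primesUpTo y).card : ℝ) := by
    rw [← card_primesUpTo, hcard]; push_cast; ring
  rw [hπ]
  have h2 : ((primesUpTo y).card : ℝ) ≤ x / Real.log x :=
    le_trans (card_primesUpTo_le (by linarith)) hs1
  linarith

lemma pi_lower_of_S {c C x₀ : ℝ} (hc : 0 < c) (hCpos : 0 < C)
    (hS : ∀ x : ℝ, x₀ ≤ x → c * Real.sqrt (x / Real.log x) ≤ S x ∧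
      S x ≤ C * Real.sqrt (x / Real.log x)) :
    ∃ c' : ℝ, 0 < c' ∧ ∀ᶠ x : ℝ in atTop,
      c' * (x / Real.log x) ≤ (Nat.primeCounting ⌊x⌋₊ : ℝ) := by
  obtain ⟨ε, hε, hε2, hεc⟩ : ∃ ε : ℝ, 0 < ε ∧ ε ≤ 1/2 ∧ ε ≤ c^2/(16*C^2) :=
    ⟨min (1/2) (c^2/(16*C^2)), lt_min (by norm_num) (by positivity),
      min_le_left _ _, min_le_right _ _⟩
  refine ⟨c/2 * Real.sqrt ε, by positivity, ?_⟩
  have hlogev : ∀ᶠ x : ℝ in atTop, 2 * Real.log (1/ε) ≤ Real.log x :=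
    Real.tendsto_log_atTop.eventually_ge_atTop _
  filter_upwards [eventually_ge_atTop x₀, eventually_ge_atTop (x₀/ε),
    eventually_ge_atTop (1/ε), eventually_ge_atTop (2:ℝ), hlogev]
    with x hx0 hx0e hx1e hx2 hlog
  have hεlog : 0 < Real.log (1/ε) := Real.log_pos (by rw [lt_div_iff₀ hε]; linarith)
  have hL : 0 < Real.log x := by linarith
  have hxpos : (0:ℝ) < x := by linarith
  set y := ε * x with hy
  have hy1 : (1:ℝ) ≤ y := by
    rw [hy]
    calc (1:ℝ) = ε * (1/ε) := by field_simp
      _ ≤ ε * x := by exact mul_le_mul_of_nonneg_left hx1e hε.le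
  have hyx : y ≤ x := by
    rw [hy]; nlinarith
  have hlogy : Real.log y = Real.log x - Real.log (1/ε) := by
    rw [hy, Real.log_mul (ne_of_gt hε) (ne_of_gt hxpos)]
    rw [one_div, Real.log_inv]; ring
  have hlogy2 : Real.log x / 2 ≤ Real.log y := by rw [hlogy]; linarith
  have hlogypos : 0 < Real.log y := by linarith
  -- apply hypotheses
  have hSy : S y ≤ C * Real.sqrt (y / Real.log y) := (hS y (by
    calc x₀ = ε * (x₀/ε) := by field_simp
      _ ≤ ε * x := mul_le_mul_of_nonneg_left hx0e hε.le)).2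
  have hSx : c * Real.sqrt (x / Real.log x) ≤ S x := (hS x hx0).1
  have hsplit := S_split_upper hy1 hyx
  set D := primesUpTo x \ primesUpTo y with hD
  -- C √(y / log y) ≤ (c/2) √(x / log x)
  have hkey : C * Real.sqrt (y / Real.log y) ≤ (c/2) * Real.sqrt (x / Real.log x) := by
    apply mul_sqrt_le hCpos.le (by positivity) (by positivity)
    have h1 : y / Real.log y ≤ 2 * ε * (x / Real.log x) := by
      rw [hy]
      rw [div_le_iff₀ hlogypos]
      have : 2 * ε * (x / Real.log x) * Real.log y ≥ 2 * ε * (x / Real.log x) * (Real.log x / 2) := by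
        apply mul_le_mul_of_nonneg_left hlogy2 (by positivity)
      calc ε * x = 2 * ε * (x / Real.log x) * (Real.log x / 2) := by field_simp
        _ ≤ 2 * ε * (x / Real.log x) * Real.log y := this
    calc C^2 * (y / Real.log y) ≤ C^2 * (2 * ε * (x / Real.log x)) := by
          apply mul_le_mul_of_nonneg_left h1 (by positivity)
      _ ≤ (c/2)^2 * (x / Real.log x) := by
          have hd : 0 ≤ x / Real.log x := by positivity
          have : C^2 * (2*ε) ≤ (c/2)^2 := by
            have : ε * (16 * C^2) ≤ c^2 := by
              rw [← le_div_iff₀ (by positivity)]; exact hεc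
            nlinarith
          nlinarith
  -- (c/2) √(x/L) ≤ card D * √(log x / y)
  have hmain : (c/2) * Real.sqrt (x / Real.log x) ≤ (D.card : ℝ) * Real.sqrt (Real.log x / y) := by
    linarith [hsplit, hSx, hSy, hkey]
  -- convert to card D ≥ (c/2)√ε (x/L)
  have hcardD : c/2 * Real.sqrt ε * (x / Real.log x) ≤ (D.card : ℝ) := by
    have hspos : 0 < Real.sqrt (Real.log x / y) := by
      apply Real.sqrt_pos.mpr; positivity
    apply le_of_mul_le_mul_right _ hspos
    have hsε : (Real.sqrt ε)^2 = ε := Real.sq_sqrt hε.le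
    have heq : (c/2 * Real.sqrt ε * (x / Real.log x))^2 * (Real.log x / y)
        = (c/2)^2 * (x / Real.log x) := by
      rw [mul_pow, mul_pow, hsε, hy]
      field_simp
    calc c/2 * Real.sqrt ε * (x / Real.log x) * Real.sqrt (Real.log x / y)
        ≤ (c/2) * Real.sqrt (x / Real.log x) :=
          mul_sqrt_le (by positivity) (by positivity) (by positivity) (le_of_eq heq)
      _ ≤ (D.card : ℝ) * Real.sqrt (Real.log x / y) := hmain
  -- π ≥ card D
  have hπ : (D.card : ℝ) ≤ (Nat.primeCounting ⌊x⌋₊ : ℝ) := by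
    rw [← card_primesUpTo]
    exact_mod_cast Finset.card_le_card (Finset.sdiff_subset)
  linarith

lemma S_lower_of_cheb {c x₀ : ℝ} (hc : 0 < c)
    (hC : ∀ x : ℝ, x₀ ≤ x → c * (x / Real.log x) ≤ (Nat.primeCounting ⌊x⌋₊ : ℝ)) :
    ∀ᶠ x : ℝ in atTop, c/4 * Real.sqrt (x / Real.log x) ≤ S x := by
  set a : ℝ := max 8 (16/c) with ha
  filter_upwards [eventually_ge_atTop x₀, eventually_ge_atTop (4096:ℝ),
    eventually_ge_atTop (a^4)] with x hx0 hx4096 hxa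
  have hx1 : (1:ℝ) ≤ x := by linarith
  have hxpos : (0:ℝ) < x := by linarith
  have hL : 0 < Real.log x := Real.log_pos (by linarith)
  set t := Real.sqrt (Real.sqrt x) with htdef
  have hta : a ≤ t := sqrt_sqrt_large (le_trans (by norm_num) (le_max_left _ _)) hxa
  have ht8 : (8:ℝ) ≤ t := le_trans (le_max_left _ _) hta
  have htc : 16/c ≤ t := le_trans (le_max_right _ _) hta
  have ht2 : t^2 = Real.sqrt x := Real.sq_sqrt (Real.sqrt_nonneg x)
  have ht4 : t^4 = x := by
    rw [show t^4 = (t^2)^2 by ring, ht2]; exact Real.sq_sqrt hxpos.le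
  have hlog : Real.log x ≤ 4 * t := log_le_four_sqrt_sqrt hx1
  set y := Real.sqrt x with hy
  have hy1 : (1:ℝ) ≤ y := by
    rw [hy]; exact (Real.le_sqrt (by norm_num) hxpos.le).mpr (by norm_num; linarith)
  have hyx : y ≤ x := sqrt_le_self' hx1
  set D := primesUpTo x \ primesUpTo y with hD
  -- √x + 1 ≤ (c/2)(x/L)
  have hsmall : y + 1 ≤ c/2 * (x / Real.log x) := by
    have h1 : (y + 1) * Real.log x ≤ (t^2 + 1) * (4*t) := by
      rw [← ht2]
      apply mul_le_mul_of_nonneg_left hlog (by nlinarith)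
    have h2 : (t^2 + 1) * (4*t) ≤ c/2 * t^4 := by
      have hct : 16 ≤ c * t := by
        rw [div_le_iff₀ hc] at htc; linarith
      nlinarith [sq_nonneg t, ht8]
    have h3 : (y+1) * Real.log x ≤ c/2 * x := by
      calc (y+1) * Real.log x ≤ (t^2+1)*(4*t) := h1
        _ ≤ c/2 * t^4 := h2
        _ = c/2 * x := by rw [ht4]
    rw [show c/2 * (x / Real.log x) = c/2 * x / Real.log x by ring, le_div_iff₀ hL]
    linarith
  -- card D ≥ (c/2)(x/L)
  have hcard : (primesUpTo x).card = D.card + (primesUpTo y).card := by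
    rw [hD]; exact (Finset.card_sdiff_add_card_eq_card (primesUpTo_mono hyx)).symm
  have hπ : c * (x / Real.log x) ≤ ((primesUpTo x).card : ℝ) := by
    rw [card_primesUpTo]; exact hC x hx0
  have hycard : ((primesUpTo y).card : ℝ) ≤ y + 1 := card_primesUpTo_le (by linarith)
  have hDge : c/2 * (x / Real.log x) ≤ (D.card : ℝ) := by
    have : ((primesUpTo x).card : ℝ) = (D.card : ℝ) + ((primesUpTo y).card : ℝ) := by
      rw [hcard]; push_cast; ring
    linarith
  -- conclude
  have hlogy : Real.log y = Real.log x / 2 := Real.log_sqrt hxpos.le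
  have hsplit := S_split_lower hy1 hyx
  rw [hlogy] at hsplit
  calc c/4 * Real.sqrt (x / Real.log x)
      ≤ (c/2 * (x / Real.log x)) * Real.sqrt (Real.log x / 2 / x) := by
        apply mul_sqrt_le (by positivity) (by positivity) (by positivity)
        have heq : (c/2 * (x / Real.log x))^2 * (Real.log x / 2 / x)
            = c^2/8 * (x / Real.log x) := by field_simp; ring
        rw [heq]
        nlinarith [div_pos hxpos hL, sq_nonneg c]
    _ ≤ (D.card : ℝ) * Real.sqrt (Real.log x / 2 / x) := by
        apply mul_le_mul_of_nonneg_right hDge (Real.sqrt_nonneg _)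
    _ ≤ S x := hsplit

set_option maxHeartbeats 2000000 in
lemma S_upper_of_cheb {C x₀ : ℝ} (hC : 0 < C)
    (h : ∀ x : ℝ, x₀ ≤ x → (Nat.primeCounting ⌊x⌋₊ : ℝ) ≤ C * (x / Real.log x)) :
    ∃ B : ℝ, 0 < B ∧ ∀ᶠ x : ℝ in atTop, S x ≤ B * Real.sqrt (x / Real.log x) := by
  obtain ⟨n₀, hn₀1024, hn₀x₀⟩ : ∃ n₀ : ℕ, (1024:ℕ) ≤ n₀ ∧ x₀ ≤ (n₀:ℝ) :=
    ⟨max ⌈x₀⌉₊ 1024, le_max_right _ _,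
      le_trans (Nat.le_ceil x₀) (by exact_mod_cast le_max_left _ _)⟩
  obtain ⟨B, hB8C, hBn₀⟩ : ∃ B : ℝ, 8*C ≤ B ∧ 2*(n₀:ℝ)+2 ≤ B :=
    ⟨max (2*(n₀:ℝ)+2) (8*C), le_max_right _ _, le_max_left _ _⟩
  have hBpos : 0 < B := lt_of_lt_of_le (by positivity) hB8C
  have hE3 : Real.exp 1 ≤ 3 := by
    have := Real.exp_one_lt_d9; linarith
  have hlog2 : 0 < Real.log 2 := Real.log_pos one_lt_two
  refine ⟨B, hBpos, ?_⟩
  have key : ∀ n : ℕ, n₀ ≤ n → S (n:ℝ) ≤ B * Real.sqrt ((n:ℝ) / Real.log n) := by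
    intro n
    induction n using Nat.strong_induction_on with
    | _ n ih =>
      intro hn
      have hn1024 : (1024:ℝ) ≤ (n:ℝ) := by exact_mod_cast le_trans hn₀1024 hn
      have hnpos : (0:ℝ) < n := by linarith
      have hL : 0 < Real.log n := Real.log_pos (by linarith)
      have hLn : Real.log n ≤ (n:ℝ) := by
        have := Real.log_le_sub_one_of_pos hnpos; linarith
      have hq1 : (1:ℝ) ≤ Real.sqrt ((n:ℝ) / Real.log n) := by
        rw [show (1:ℝ) = Real.sqrt 1 by rw [Real.sqrt_one]]
        apply Real.sqrt_le_sqrt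
        rw [le_div_iff₀ hL]; linarith
      by_cases hcase : n ≤ 2*n₀
      · -- base case
        have hterm : ∀ p ∈ primesUpTo (n:ℝ), Real.sqrt (Real.log p / p) ≤ 1 := by
          intro p hp
          have hpp : p.Prime := (mem_primesUpTo.mp hp).1
          have hppos : (0:ℝ) < p := by exact_mod_cast hpp.pos
          rw [Real.sqrt_le_one, div_le_one hppos]
          have := Real.log_le_sub_one_of_pos hppos; linarith
        have h1 : S (n:ℝ) ≤ ((primesUpTo (n:ℝ)).card : ℝ) := by
          have := Finset.sum_le_card_nsmul (primesUpTo (n:ℝ))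
            (fun p => Real.sqrt (Real.log p / p)) 1 hterm
          rw [nsmul_eq_mul, mul_one] at this
          exact this
        have h2 : ((primesUpTo (n:ℝ)).card : ℝ) ≤ (n:ℝ) + 1 :=
          card_primesUpTo_le hnpos.le
        have h3 : (n:ℝ) + 1 ≤ B := by
          have : (n:ℝ) ≤ 2*(n₀:ℝ) := by exact_mod_cast hcase
          linarith
        calc S (n:ℝ) ≤ (n:ℝ) + 1 := le_trans h1 h2
          _ ≤ B := h3
          _ = B * 1 := by ring
          _ ≤ B * Real.sqrt ((n:ℝ) / Real.log n) := by
              apply mul_le_mul_of_nonneg_left hq1 hBpos.le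
      · -- inductive step
        push_neg at hcase
        set m : ℕ := n / 2 with hmdef
        have hmn₀ : n₀ ≤ m := by omega
        have hmlt : m < n := Nat.div_lt_self (by omega) one_lt_two
        have hm1024 : (1024:ℝ) ≤ (m:ℝ) := by exact_mod_cast le_trans hn₀1024 hmn₀
        have hmpos : (0:ℝ) < m := by linarith
        have hLm : 0 < Real.log m := Real.log_pos (by linarith)
        have hm_half : (m:ℝ) ≤ (n:ℝ)/2 := by
          have : (2*m : ℕ) ≤ n := by omega
          have := (Nat.cast_le (α := ℝ)).mpr this
          push_cast at this; linarith
        have hm_quarter : (n:ℝ) ≤ 4*(m:ℝ) := by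
          have : n ≤ 2*m + 1 := by omega
          have := (Nat.cast_le (α := ℝ)).mpr this
          push_cast at this
          linarith
        have hm1 : (1:ℝ) ≤ (m:ℝ) := by linarith
        have hmn : (m:ℝ) ≤ (n:ℝ) := by exact_mod_cast hmlt.le
        -- split
        have hsplit := S_split_upper hm1 hmn
        set D := primesUpTo (n:ℝ) \ primesUpTo (m:ℝ) with hD
        -- IH
        have hih := ih m hmlt hmn₀
        -- log n ≥ 11 log 2
        have hL11 : 11 * Real.log 2 ≤ Real.log n := by
          calc 11 * Real.log 2 = Real.log (2^11) := by
                rw [Real.log_pow]; push_cast; ring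
            _ ≤ Real.log n := Real.log_le_log (by positivity) (by norm_num; linarith)
        have hlogn2 : Real.log ((n:ℝ)/2) = Real.log n - Real.log 2 :=
          Real.log_div (ne_of_gt hnpos) two_ne_zero
        have hlogn2pos : 0 < Real.log ((n:ℝ)/2) := by rw [hlogn2]; linarith
        -- first piece : B √(m / log m) ≤ (3/4) B √(n / log n)
        have hpiece1 : B * Real.sqrt ((m:ℝ) / Real.log m) ≤
            3/4 * B * Real.sqrt ((n:ℝ) / Real.log n) := by
          apply mul_sqrt_le hBpos.le (by positivity) (by positivity)
          have hmono : (m:ℝ) / Real.log m ≤ ((n:ℝ)/2) / Real.log ((n:ℝ)/2) :=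
            div_log_mono (le_trans (by linarith) hm1024) hm_half
          have h916 : ((n:ℝ)/2) / Real.log ((n:ℝ)/2) ≤ 9/16 * ((n:ℝ) / Real.log n) := by
            rw [hlogn2, div_le_iff₀ (by linarith)]
            have hnd : 9/16 * ((n:ℝ) / Real.log n) * (Real.log n - Real.log 2)
                = (n:ℝ) * (9/16 * (Real.log n - Real.log 2) / Real.log n) := by ring
            rw [hnd]
            rw [show (n:ℝ)/2 = (n:ℝ) * (1/2) by ring]
            apply mul_le_mul_of_nonneg_left _ hnpos.le
            rw [le_div_iff₀ hL]
            linarith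
          nlinarith [hmono, h916, sq_nonneg B]
        -- second piece : card D bound
        have hcardD : (D.card : ℝ) ≤ C * ((n:ℝ) / Real.log n) := by
          calc (D.card : ℝ) ≤ ((primesUpTo (n:ℝ)).card : ℝ) := by
                exact_mod_cast Finset.card_le_card (Finset.sdiff_subset)
            _ = (Nat.primeCounting ⌊(n:ℝ)⌋₊ : ℝ) := by rw [card_primesUpTo]
            _ ≤ C * ((n:ℝ) / Real.log n) := h (n:ℝ) (le_trans hn₀x₀ (by exact_mod_cast hn))
        have hpiece2 : (D.card : ℝ) * Real.sqrt (Real.log (n:ℝ) / (m:ℝ)) ≤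
            1/4 * B * Real.sqrt ((n:ℝ) / Real.log n) := by
          calc (D.card : ℝ) * Real.sqrt (Real.log (n:ℝ) / (m:ℝ))
              ≤ (C * ((n:ℝ) / Real.log n)) * Real.sqrt (Real.log (n:ℝ) / (m:ℝ)) := by
                apply mul_le_mul_of_nonneg_right hcardD (Real.sqrt_nonneg _)
            _ ≤ 1/4 * B * Real.sqrt ((n:ℝ) / Real.log n) := by
                apply mul_sqrt_le (by positivity) (by positivity) (by positivity)
                have heq : (C * ((n:ℝ) / Real.log n))^2 * (Real.log (n:ℝ) / (m:ℝ))
                    = C^2 * ((n:ℝ) / Real.log n) * ((n:ℝ)/(m:ℝ)) := by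
                  field_simp
                rw [heq]
                have hnm4 : (n:ℝ)/(m:ℝ) ≤ 4 := by
                  rw [div_le_iff₀ hmpos]; linarith
                have hBC : 4*C^2 ≤ (1/4*B)^2 := by nlinarith
                have hnL : 0 ≤ (n:ℝ) / Real.log n := by positivity
                nlinarith [mul_nonneg (sq_nonneg C) hnL]
        calc S (n:ℝ) ≤ S (m:ℝ) + (D.card : ℝ) * Real.sqrt (Real.log (n:ℝ) / (m:ℝ)) := hsplit
          _ ≤ 3/4 * B * Real.sqrt ((n:ℝ) / Real.log n)
              + 1/4 * B * Real.sqrt ((n:ℝ) / Real.log n) := by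
                have := le_trans hih hpiece1
                linarith [hpiece2]
          _ = B * Real.sqrt ((n:ℝ) / Real.log n) := by ring
  -- from naturals to reals
  filter_upwards [eventually_ge_atTop ((n₀:ℝ)+1)] with x hx
  have hxpos : (0:ℝ) < x := by
    have : (0:ℝ) ≤ (n₀:ℝ) := by positivity
    linarith
  set n : ℕ := ⌊x⌋₊ with hndef
  have hnn₀ : n₀ ≤ n := Nat.le_floor (by linarith)
  have hSx : S x = S (n:ℝ) := by
    rw [S, S, hndef, primesUpTo_natCast_floor x]
  have hnx : (n:ℝ) ≤ x := Nat.floor_le hxpos.le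
  have hn1024 : (1024:ℝ) ≤ (n:ℝ) := by exact_mod_cast le_trans hn₀1024 hnn₀
  have hmono : (n:ℝ) / Real.log n ≤ x / Real.log x :=
    div_log_mono (le_trans (by linarith) hn1024) hnx
  calc S x = S (n:ℝ) := hSx
    _ ≤ B * Real.sqrt ((n:ℝ) / Real.log n) := key n hnn₀
    _ ≤ B * Real.sqrt (x / Real.log x) := by
        apply mul_le_mul_of_nonneg_left (Real.sqrt_le_sqrt hmono) hBpos.le

theorem stmt_15 :
    (∃ c C : ℝ, 0 < c ∧ c ≤ C ∧ ∀ᶠ x : ℝ in atTop,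
      c * Real.sqrt (x / Real.log x) ≤ S x ∧ S x ≤ C * Real.sqrt (x / Real.log x)) ↔
    (∃ c C : ℝ, 0 < c ∧ c ≤ C ∧ ∀ᶠ x : ℝ in atTop,
      c * (x / Real.log x) ≤ (Nat.primeCounting ⌊x⌋₊ : ℝ) ∧
      (Nat.primeCounting ⌊x⌋₊ : ℝ) ≤ C * (x / Real.log x)) := by
  constructor
  · rintro ⟨c, C, hc, hcC, hev⟩
    have hCpos : 0 < C := lt_of_lt_of_le hc hcC
    obtain ⟨x₀, hS⟩ := eventually_atTop.mp hev
    have hupper := pi_upper_of_S hCpos.le (fun x hx => (hS x hx).2)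
    obtain ⟨c', hc', hlower⟩ := pi_lower_of_S hc hCpos hS
    refine ⟨min c' (2*C+1), max c' (2*C+1), lt_min hc' (by positivity),
      le_trans (min_le_left _ _) (le_max_left _ _), ?_⟩
    filter_upwards [hupper, hlower, eventually_ge_atTop (3:ℝ)] with x hu hl hx3
    have hL : 0 < Real.log x := Real.log_pos (by linarith)
    have hxL : 0 ≤ x / Real.log x := by positivity
    constructor
    · calc min c' (2*C+1) * (x / Real.log x) ≤ c' * (x / Real.log x) :=
            mul_le_mul_of_nonneg_right (min_le_left _ _) hxL
        _ ≤ _ := hl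
    · calc (Nat.primeCounting ⌊x⌋₊ : ℝ) ≤ (2*C+1) * (x / Real.log x) := hu
        _ ≤ max c' (2*C+1) * (x / Real.log x) :=
            mul_le_mul_of_nonneg_right (le_max_right _ _) hxL
  · rintro ⟨c, C, hc, hcC, hev⟩
    have hCpos : 0 < C := lt_of_lt_of_le hc hcC
    obtain ⟨x₀, hCh⟩ := eventually_atTop.mp hev
    have hlower := S_lower_of_cheb hc (fun x hx => (hCh x hx).1)
    obtain ⟨B, hB, hupper⟩ := S_upper_of_cheb hCpos (fun x hx => (hCh x hx).2)
    refine ⟨min (c/4) B, max (c/4) B, lt_min (by positivity) hB,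
      le_trans (min_le_left _ _) (le_max_left _ _), ?_⟩
    filter_upwards [hlower, hupper] with x hl hu
    have hq : 0 ≤ Real.sqrt (x / Real.log x) := Real.sqrt_nonneg _
    constructor
    · calc min (c/4) B * Real.sqrt (x / Real.log x) ≤ c/4 * Real.sqrt (x / Real.log x) :=
            mul_le_mul_of_nonneg_right (min_le_left _ _) hq
        _ ≤ S x := hl
    · calc S x ≤ B * Real.sqrt (x / Real.log x) := hu
        _ ≤ max (c/4) B * Real.sqrt (x / Real.log x) :=
            mul_le_mul_of_nonneg_right (le_max_right _ _) hq
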